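/- arXiv:0711.1771 — 2 statements merged into one kernel-verified Lean document; each statement's English description precedes it below -/
import Mathlib

section
/- For λ, μ ∈ Q with λμ(λ²−μ²) ≠ 0, the curve y² = x(x+μ²)(x+λ²) is an elliptic curve whose rational torsion contains Z/4Z ⊕ Z/2Z; specifically with μ = 1, the point P = (λ, λ(1+λ)) has order 4 with 2P = (0,0), and Q = (−λ², 0) is a 2-torsion point not in ⟨P⟩ (for λ ≠ 0, ±1). -/
/-!
On `y² = x(x + μ²)(x + λ²)` the tangent at `P = (λμ, λμ(λ + μ))` has slope `λ + μ`
and meets the curve again only at `x = 0`, so `2P = (0, 0)`. Points with `y = 0`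
have order `2`, hence `P` has order `4`. The only element of order `2` in `⟨P⟩` is
`2P`, so the `2`-torsion point `Q = (−λ², 0)` lies outside `⟨P⟩`, and `P`, `Q` span
a copy of `ℤ/4 × ℤ/2`.
-/

open WeierstrassCurve.Affine

section ZModHom

variable {G : Type*} [AddCommGroup G]

def zmultiplesZModHom (P : G) {n : ℕ} (hP : addOrderOf P = n) : ZMod n →+ G :=
  ZMod.lift n ⟨zmultiplesHom G P, by simp [← hP, addOrderOf_nsmul_eq_zero]⟩

@[simp]
lemma zmultiplesZModHom_intCast (P : G) {n : ℕ} (hP : addOrderOf P = n) (k : ℤ) :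
    zmultiplesZModHom P hP k = k • P :=
  ZMod.lift_coe _ _ k

lemma zmultiplesZModHom_injective (P : G) {n : ℕ} (hP : addOrderOf P = n) :
    Function.Injective (zmultiplesZModHom P hP) := by
  refine (ZMod.lift_injective n).mpr fun k hk => ?_
  rw [ZMod.intCast_zmod_eq_zero_iff_dvd, ← hP]
  exact addOrderOf_dvd_iff_zsmul_eq_zero.mpr hk

lemma injective_coprod_zmultiplesZModHom {P Q : G} {n : ℕ} (hP : addOrderOf P = n)
    (hQ : addOrderOf Q = 2) (hQP : Q ∉ AddSubgroup.zmultiples P) :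
    Function.Injective ((zmultiplesZModHom P hP).coprod (zmultiplesZModHom Q hQ)) := by
  rw [injective_iff_map_eq_zero]
  rintro ⟨a, b⟩ hab
  rw [AddMonoidHom.coprod_apply] at hab
  obtain rfl | rfl : b = 0 ∨ b = 1 := by clear hab; revert b; decide
  · rw [_root_.map_zero, add_zero, ← _root_.map_zero (zmultiplesZModHom P hP)] at hab
    simpa using zmultiplesZModHom_injective P hP hab
  · refine absurd ⟨-(ZMod.cast a : ℤ), ?_⟩ hQP
    have hQ1 : zmultiplesZModHom Q hQ 1 = Q := by simpa using zmultiplesZModHom_intCast Q hQ 1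
    rw [← ZMod.intCast_zmod_cast a, zmultiplesZModHom_intCast, hQ1] at hab
    simpa [neg_zsmul, neg_eq_iff_add_eq_zero] using hab

lemma eq_zero_or_eq_nsmul_of_mem_zmultiples {P Q : G} {n : ℕ} (hP : addOrderOf P = 2 * n)
    (hQ : 2 • Q = 0) (hQP : Q ∈ AddSubgroup.zmultiples P) : Q = 0 ∨ Q = n • P := by
  obtain ⟨k, rfl⟩ := AddSubgroup.mem_zmultiples_iff.mp hQP
  have h2n : ((2 * n : ℕ) : ℤ) ∣ 2 * k := by
    rw [← hP]
    refine addOrderOf_dvd_iff_zsmul_eq_zero.mpr ?_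
    rw [mul_zsmul, two_zsmul]
    simpa [two_nsmul] using hQ
  obtain ⟨j, rfl⟩ : (n : ℤ) ∣ k := by
    push_cast at h2n
    exact (mul_dvd_mul_iff_left two_ne_zero).mp h2n
  have h2nP : (2 * n) • P = 0 := hP ▸ addOrderOf_nsmul_eq_zero P
  obtain ⟨i, rfl | rfl⟩ := Int.even_or_odd' j
  · left
    rw [show (n : ℤ) * (2 * i) = i * ((2 * n : ℕ) : ℤ) by push_cast; ring, mul_zsmul,
      natCast_zsmul, h2nP, zsmul_zero]
  · right
    rw [show (n : ℤ) * (2 * i + 1) = i * ((2 * n : ℕ) : ℤ) + n by push_cast; ring, add_zsmul,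
      mul_zsmul, natCast_zsmul, h2nP, zsmul_zero, zero_add, natCast_zsmul]

end ZModHom

lemma addOrderOf_some_of_Y_eq {F : Type*} [Field F] [DecidableEq F]
    {W : WeierstrassCurve.Affine F} {x y : F} (h : W.Nonsingular x y) (hy : y = W.negY x y) :
    addOrderOf (Point.some _ _ h) = 2 :=
  addOrderOf_eq_prime (by rw [two_nsmul]; exact Point.add_self_of_Y_eq hy) (Point.some_ne_zero h)

def torsionFourTwoCurve {F : Type*} [Field F] (l m : F) : WeierstrassCurve.Affine F :=
  { a₁ := 0, a₂ := m ^ 2 + l ^ 2, a₃ := 0, a₄ := m ^ 2 * l ^ 2, a₆ := 0 }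

namespace torsionFourTwoCurve

variable {F : Type*} [Field F] {l m : F}

lemma Δ_eq :
    (torsionFourTwoCurve l m).Δ = 16 * (l ^ 2 * m ^ 2 * (l ^ 2 - m ^ 2)) ^ 2 := by
  simp only [torsionFourTwoCurve, WeierstrassCurve.Δ, WeierstrassCurve.b₂, WeierstrassCurve.b₄,
    WeierstrassCurve.b₆, WeierstrassCurve.b₈]
  ring

lemma negY_eq (x y : F) : (torsionFourTwoCurve l m).negY x y = -y := by
  simp [torsionFourTwoCurve, negY]

lemma nonsingular_zero_zero (h : l * m ≠ 0) : (torsionFourTwoCurve l m).Nonsingular 0 0 := by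
  rw [nonsingular_iff, equation_iff]
  simp only [torsionFourTwoCurve]
  refine ⟨by ring, Or.inl fun h' => h ?_⟩
  exact pow_eq_zero_iff two_ne_zero |>.mp (by linear_combination -h')

lemma nonsingular_neg_sq_zero (h : l * (l ^ 2 - m ^ 2) ≠ 0) :
    (torsionFourTwoCurve l m).Nonsingular (-l ^ 2) 0 := by
  rw [nonsingular_iff, equation_iff]
  simp only [torsionFourTwoCurve]
  refine ⟨by ring, Or.inl fun h' => h ?_⟩
  obtain hl | hlm := mul_eq_zero.mp (by linear_combination -h' : l * (l * (l ^ 2 - m ^ 2)) = 0)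
  · simp [hl]
  · exact hlm

lemma nonsingular_mul_mul_add (h2 : (2 : F) ≠ 0) (h : l * m * (l + m) ≠ 0) :
    (torsionFourTwoCurve l m).Nonsingular (l * m) (l * m * (l + m)) := by
  rw [nonsingular_iff, equation_iff]
  simp only [torsionFourTwoCurve]
  refine ⟨by ring, Or.inr fun h' => h ?_⟩
  exact (mul_eq_zero.mp (by linear_combination h' : 2 * (l * m * (l + m)) = 0)).resolve_left h2

variable [DecidableEq F]

lemma two_nsmul_some_mul_mul_add (h2 : (2 : F) ≠ 0) (h : l * m * (l + m) ≠ 0) :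
    2 • Point.some _ _ (nonsingular_mul_mul_add h2 h) =
      Point.some _ _ (nonsingular_zero_zero (left_ne_zero_of_mul h)) := by
  have hy : l * m * (l + m) ≠ (torsionFourTwoCurve l m).negY (l * m) (l * m * (l + m)) := by
    rw [negY_eq]
    exact fun h' => h (by simpa [h2] using (by linear_combination h' : 2 * (l * m * (l + m)) = 0))
  have hslope :
      (torsionFourTwoCurve l m).slope (l * m) (l * m) (l * m * (l + m)) (l * m * (l + m)) =
        l + m := by
    have h2y : l * m * (l + m) - -(l * m * (l + m)) ≠ 0 := by
      rw [sub_neg_eq_add, ← two_mul]; exact mul_ne_zero h2 h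
    rw [slope_of_Y_ne rfl hy, negY_eq, div_eq_iff h2y]
    simp only [torsionFourTwoCurve]
    ring
  rw [two_nsmul, Point.add_self_of_Y_ne hy]
  congr 1
  · rw [addX, hslope]; simp only [torsionFourTwoCurve]; ring
  · rw [addY, negAddY, addX, negY_eq, hslope]; simp only [torsionFourTwoCurve]; ring

-- Stated with the nonsingularity proofs bound by `∃`, so that the coordinates can be rewritten
-- (as at `m = 1` below) without a dependent-type mismatch.
theorem exists_order_four_and_order_two_points (h2 : (2 : F) ≠ 0)
    (h : l * m * (l ^ 2 - m ^ 2) ≠ 0) :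
    ∃ hP : (torsionFourTwoCurve l m).Nonsingular (l * m) (l * m * (l + m)),
      addOrderOf (Point.some _ _ hP) = 4 ∧
      (∃ h0 : (torsionFourTwoCurve l m).Nonsingular 0 0,
        2 • Point.some _ _ hP = Point.some _ _ h0) ∧
      ∃ hQ : (torsionFourTwoCurve l m).Nonsingular (-l ^ 2) 0,
        addOrderOf (Point.some _ _ hQ) = 2 ∧
        Point.some _ _ hQ ∉ AddSubgroup.zmultiples (Point.some _ _ hP) := by
  have hy : l * m * (l + m) ≠ 0 := fun h' => h (by linear_combination (l - m) * h')
  have hx : l * (l ^ 2 - m ^ 2) ≠ 0 := fun h' => h (by linear_combination m * h')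
  have h2P := two_nsmul_some_mul_mul_add h2 hy
  have hT : addOrderOf (Point.some _ _ (nonsingular_zero_zero (left_ne_zero_of_mul hy))) = 2 :=
    addOrderOf_some_of_Y_eq _ (by rw [negY_eq, neg_zero])
  have hord4 : addOrderOf (Point.some _ _ (nonsingular_mul_mul_add h2 hy)) = 4 :=
    addOrderOf_eq_prime_pow (p := 2) (n := 1) (by rw [pow_one, h2P]; exact Point.some_ne_zero _)
      (by rw [pow_succ, pow_one, mul_nsmul, h2P, ← hT, addOrderOf_nsmul_eq_zero])
  have hQ := nonsingular_neg_sq_zero hx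
  have hordQ : addOrderOf (Point.some _ _ hQ) = 2 :=
    addOrderOf_some_of_Y_eq _ (by rw [negY_eq, neg_zero])
  refine ⟨_, hord4, ⟨_, h2P⟩, hQ, hordQ, fun hmem => ?_⟩
  obtain hQ0 | hQT := eq_zero_or_eq_nsmul_of_mem_zmultiples (n := 2) hord4
    (by simpa only [hordQ] using addOrderOf_nsmul_eq_zero (Point.some _ _ hQ)) hmem
  · exact Point.some_ne_zero _ hQ0
  · rw [h2P, Point.some.injEq] at hQT
    exact left_ne_zero_of_mul hx (by simpa using hQT.1)

end torsionFourTwoCurve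

open WeierstrassCurve.Affine in
/-- For `λ, μ ∈ ℚ` with `λμ(λ² − μ²) ≠ 0`, the curve `y² = x(x + μ²)(x + λ²)` is an elliptic
curve whose rational torsion contains `ℤ/4ℤ ⊕ ℤ/2ℤ`; specifically with `μ = 1` (and
`λ ≠ 0, ±1`), the point `P = (λ, λ(1+λ))` has order `4` with `2P = (0,0)`, and `Q = (−λ², 0)`
is a `2`-torsion point not in `⟨P⟩`. -/
theorem stmt_12 (lam mu : ℚ) (hlm : lam * mu * (lam ^ 2 - mu ^ 2) ≠ 0)
    (Wgen W : WeierstrassCurve.Affine ℚ)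
    (hWgen : Wgen = { a₁ := 0, a₂ := mu ^ 2 + lam ^ 2, a₃ := 0, a₄ := mu ^ 2 * lam ^ 2,
                      a₆ := 0 })
    (hW : W = { a₁ := 0, a₂ := 1 + lam ^ 2, a₃ := 0, a₄ := lam ^ 2, a₆ := 0 })
    (hlam : lam ≠ 0 ∧ lam ≠ 1 ∧ lam ≠ -1) :
    (Wgen.Δ ≠ 0 ∧ ∃ f : (ZMod 4 × ZMod 2) →+ Wgen.Point, Function.Injective f) ∧
    (∃ hP : W.Nonsingular lam (lam * (1 + lam)),
      addOrderOf (Point.some _ _ hP) = 4 ∧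
      (∃ h0 : W.Nonsingular 0 0, 2 • Point.some _ _ hP = Point.some _ _ h0) ∧
      ∃ hQ : W.Nonsingular (-lam ^ 2) 0,
        addOrderOf (Point.some _ _ hQ) = 2 ∧
        Point.some _ _ hQ ∉ AddSubgroup.zmultiples (Point.some _ _ hP)) := by
  refine ⟨?_, ?_⟩
  · obtain rfl : Wgen = torsionFourTwoCurve lam mu := hWgen
    obtain ⟨_, hord4, -, _, hord2, hQP⟩ :=
      torsionFourTwoCurve.exists_order_four_and_order_two_points two_ne_zero hlm
    refine ⟨?_, _, injective_coprod_zmultiplesZModHom hord4 hord2 hQP⟩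
    rw [torsionFourTwoCurve.Δ_eq]
    have : lam ^ 2 * mu ^ 2 * (lam ^ 2 - mu ^ 2) ≠ 0 := by
      convert mul_ne_zero (left_ne_zero_of_mul hlm) hlm using 1; ring
    exact mul_ne_zero (by norm_num) (pow_ne_zero 2 this)
  · obtain rfl : W = torsionFourTwoCurve lam 1 := by rw [hW, torsionFourTwoCurve]; norm_num
    obtain ⟨hl, h1, hm1⟩ := hlam
    have h : lam * 1 * (lam ^ 2 - 1 ^ 2) ≠ 0 := by
      refine mul_ne_zero (by simpa using hl) (sub_ne_zero.mpr fun h' => ?_)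
      rcases sq_eq_sq_iff_eq_or_eq_neg.mp h' with h' | h' <;> contradiction
    have := torsionFourTwoCurve.exists_order_four_and_order_two_points two_ne_zero h
    rwa [mul_one, add_comm lam 1] at this
end

section
/- The elliptic curve given by y² + 4xy + y = x³ is isomorphic to the curve E37B: y² + y = x³ + x² − 3x + 1 via the substitution (x, y) ↦ (x + 1, y + 2x), and the point (0,0) on y² + 4xy + y = x³ has exact order 3. -/
namespace WeierstrassCurve.Affine

variable {F : Type*} [Field F] {W : Affine F}

lemma nonsingular_zero_zero (ha₆ : W.a₆ = 0) (ha₃ : W.a₃ ≠ 0) : W.Nonsingular 0 0 := by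
  rw [nonsingular_iff, equation_iff, ha₆]
  refine ⟨by ring, Or.inr ?_⟩
  simpa [eq_comm] using ha₃

variable [DecidableEq F]

/-- The tangent line `y = 0` at the origin meets `y² + a₁xy + a₃y = x³` with multiplicity three:
the origin is a flex. -/
lemma Point.some_zero_zero_add_self (ha₂ : W.a₂ = 0) (ha₄ : W.a₄ = 0) (ha₃ : W.a₃ ≠ 0)
    (h : W.Nonsingular 0 0) : Point.some 0 0 h + Point.some 0 0 h = -Point.some 0 0 h := by
  have hy : (0 : F) ≠ W.negY 0 0 := by simpa [negY, eq_comm] using ha₃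
  have hslope : W.slope 0 0 0 0 = 0 := by simp [slope_of_Y_ne rfl hy, ha₄]
  rw [Point.add_self_of_Y_ne' hy]
  congr 1
  rw [Point.some.injEq]
  simp [negAddY, addX, hslope, ha₂]

lemma Point.addOrderOf_some_zero_zero (ha₂ : W.a₂ = 0) (ha₄ : W.a₄ = 0) (ha₃ : W.a₃ ≠ 0)
    (h : W.Nonsingular 0 0) : addOrderOf (Point.some 0 0 h) = 3 := by
  have : Fact (Nat.Prime 3) := ⟨Nat.prime_three⟩
  refine addOrderOf_eq_prime ?_ (by simp)
  rw [show 3 = 2 + 1 from rfl, succ_nsmul, two_nsmul, some_zero_zero_add_self ha₂ ha₄ ha₃ h,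
    neg_add_cancel]

end WeierstrassCurve.Affine

open WeierstrassCurve.Affine in
/-- The curve `y² + 4xy + y = x³` is isomorphic to the curve `E37B : y² + y = x³ + x² − 3x + 1`
via the substitution `(x, y) ↦ (x + 1, y + 2x)` (i.e. `(x, y)` satisfies the first equation if
and only if its image satisfies the second), and the point `(0,0)` on `y² + 4xy + y = x³` has
exact order `3`. -/
theorem stmt_14 (W : WeierstrassCurve.Affine ℚ)
    (hW : W = { a₁ := 4, a₂ := 0, a₃ := 1, a₄ := 0, a₆ := 0 }) :
    (∀ x y : ℚ, y ^ 2 + 4 * x * y + y = x ^ 3 ↔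
      (y + 2 * x) ^ 2 + (y + 2 * x) =
        (x + 1) ^ 3 + (x + 1) ^ 2 - 3 * (x + 1) + 1) ∧
    ∃ h : W.Nonsingular 0 0, addOrderOf (Point.some _ _ h) = 3 := by
  refine ⟨fun x y ↦ ⟨fun h ↦ by linear_combination h, fun h ↦ by linear_combination h⟩, ?_⟩
  have ha₃ : W.a₃ ≠ 0 := by simp [hW]
  have h := nonsingular_zero_zero (by rw [hW]) ha₃
  exact ⟨h, Point.addOrderOf_some_zero_zero (by rw [hW]) (by rw [hW]) ha₃ h⟩
end
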